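/- If φ is an Lμ-formula (without free propositional variables) with ⊢_Lμ φ, then there is a derivation of φ in the Lμ-calculus consisting only of Lμ-formulas, i.e. a derivation in which no formula has a free propositional variable. -/

import Mathlib

open FirstOrder Set

namespace GLMu

/-! ## Barred propositional variables -/

/-- Barred propositional variables: `Sum.inl X` is `X`, `Sum.inr X` is `X̄`. -/
def bar {V : Type*} : V ⊕ V → V ⊕ V := Sum.elim Sum.inr Sum.inl

def unbar {V : Type*} : V ⊕ V → V := Sum.elim id id

/-! ## First-order literals -/

/-- First-order literals with equality: atomic formulas and their negations. -/
inductive Lit (L : Language) (𝒳 : Type*) where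
  | eq (t₁ t₂ : L.Term 𝒳)
  | ne (t₁ t₂ : L.Term 𝒳)
  | rel {n : ℕ} (R : L.Relations n) (ts : Fin n → L.Term 𝒳)
  | nrel {n : ℕ} (R : L.Relations n) (ts : Fin n → L.Term 𝒳)

namespace Lit

variable {L : Language} {𝒳 : Type*}

/-- Negation of a literal. -/
def neg : Lit L 𝒳 → Lit L 𝒳
  | .eq t₁ t₂ => .ne t₁ t₂
  | .ne t₁ t₂ => .eq t₁ t₂
  | .rel R ts => .nrel R ts
  | .nrel R ts => .rel R ts

variable {M : Type*} [L.Structure M]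

/-- Semantics of a literal: the set of states in which it is true. -/
def sem : Lit L 𝒳 → Set (𝒳 → M)
  | .eq t₁ t₂ => {ω | t₁.realize ω = t₂.realize ω}
  | .ne t₁ t₂ => {ω | t₁.realize ω ≠ t₂.realize ω}
  | .rel R ts => {ω | Language.Structure.RelMap R (fun i => (ts i).realize ω)}
  | .nrel R ts => {ω | ¬ Language.Structure.RelMap R (fun i => (ts i).realize ω)}

end Lit

/-- The set of object variables occurring in a term. -/
def tvars {L : Language} {𝒳 : Type*} : L.Term 𝒳 → Set 𝒳
  | .var x => {x}
  | .func _ ts => ⋃ i, tvars (ts i)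

/-- The set of object variables occurring in a literal. -/
def Lit.ovars {L : Language} {𝒳 : Type*} : Lit L 𝒳 → Set 𝒳
  | .eq t₁ t₂ => tvars t₁ ∪ tvars t₂
  | .ne t₁ t₂ => tvars t₁ ∪ tvars t₂
  | .rel _ ts => ⋃ i, tvars (ts i)
  | .nrel _ ts => ⋃ i, tvars (ts i)

/-! ## Syntax of the first-order modal μ-calculus -/

/-- Formulas of the first-order modal μ-calculus `Lμ_𝒱` (raw syntax). -/
inductive MuF (L : Language) (𝒳 Act V : Type*) where
  | lit (p : Lit L 𝒳)
  | var (X : V ⊕ V)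
  | or (φ₁ φ₂ : MuF L 𝒳 Act V)
  | and (φ₁ φ₂ : MuF L 𝒳 Act V)
  | dia (a : Act) (φ : MuF L 𝒳 Act V)
  | box (a : Act) (φ : MuF L 𝒳 Act V)
  | mu (X : V ⊕ V) (φ : MuF L 𝒳 Act V)
  | nu (X : V ⊕ V) (φ : MuF L 𝒳 Act V)

namespace MuF

variable {L : Language} {𝒳 Act V : Type*}

/-- The propositional variables (in `𝒱̄`) mentioned anywhere in a formula. -/
def mentions : MuF L 𝒳 Act V → Set (V ⊕ V)
  | .lit _ => ∅
  | .var X => {X}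
  | .or φ ψ => φ.mentions ∪ ψ.mentions
  | .and φ ψ => φ.mentions ∪ ψ.mentions
  | .dia _ φ => φ.mentions
  | .box _ φ => φ.mentions
  | .mu X φ => {X} ∪ φ.mentions
  | .nu X φ => {X} ∪ φ.mentions

/-- Well-formedness: in `μX.ψ` and `νX.ψ` the body `ψ` may not mention `X̄`.
This is the constraint built into the grammar of `Lμ_𝒱`. -/
def WF : MuF L 𝒳 Act V → Prop
  | .lit _ => True
  | .var _ => True
  | .or φ ψ => φ.WF ∧ ψ.WF
  | .and φ ψ => φ.WF ∧ ψ.WF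
  | .dia _ φ => φ.WF
  | .box _ φ => φ.WF
  | .mu X φ => bar X ∉ φ.mentions ∧ φ.WF
  | .nu X φ => bar X ∉ φ.mentions ∧ φ.WF

/-- The free propositional variables of a formula. -/
def freeVars : MuF L 𝒳 Act V → Set (V ⊕ V)
  | .lit _ => ∅
  | .var X => {X}
  | .or φ ψ => φ.freeVars ∪ ψ.freeVars
  | .and φ ψ => φ.freeVars ∪ ψ.freeVars
  | .dia _ φ => φ.freeVars
  | .box _ φ => φ.freeVars
  | .mu X φ => φ.freeVars \ {X, bar X}
  | .nu X φ => φ.freeVars \ {X, bar X}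

/-- The propositional variables bound by a fixpoint operator somewhere in a formula. -/
def boundVars : MuF L 𝒳 Act V → Set (V ⊕ V)
  | .lit _ => ∅
  | .var _ => ∅
  | .or φ ψ => φ.boundVars ∪ ψ.boundVars
  | .and φ ψ => φ.boundVars ∪ ψ.boundVars
  | .dia _ φ => φ.boundVars
  | .box _ φ => φ.boundVars
  | .mu X φ => {X} ∪ φ.boundVars
  | .nu X φ => {X} ∪ φ.boundVars

/-- The list of bound propositional variables, with multiplicity. -/
def boundList : MuF L 𝒳 Act V → List (V ⊕ V)
  | .lit _ => []
  | .var _ => []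
  | .or φ ψ => φ.boundList ++ ψ.boundList
  | .and φ ψ => φ.boundList ++ ψ.boundList
  | .dia _ φ => φ.boundList
  | .box _ φ => φ.boundList
  | .mu X φ => X :: φ.boundList
  | .nu X φ => X :: φ.boundList

/-- Every propositional variable is bound at most once. -/
def BoundOnce (φ : MuF L 𝒳 Act V) : Prop := (φ.boundList.map unbar).Nodup

/-- The transition symbols occurring in a formula. -/
def acts : MuF L 𝒳 Act V → Set Act
  | .lit _ => ∅
  | .var _ => ∅
  | .or φ ψ => φ.acts ∪ ψ.acts
  | .and φ ψ => φ.acts ∪ ψ.acts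
  | .dia a φ => {a} ∪ φ.acts
  | .box a φ => {a} ∪ φ.acts
  | .mu _ φ => φ.acts
  | .nu _ φ => φ.acts

/-- The complement `φ̄` of an `Lμ_𝒱`-formula. -/
def compl : MuF L 𝒳 Act V → MuF L 𝒳 Act V
  | .lit p => .lit p.neg
  | .var X => .var (bar X)
  | .or φ ψ => .and φ.compl ψ.compl
  | .and φ ψ => .or φ.compl ψ.compl
  | .dia a φ => .box a φ.compl
  | .box a φ => .dia a φ.compl
  | .mu X φ => .nu (bar X) φ.compl
  | .nu X φ => .mu (bar X) φ.compl

/-- Implication `φ → ψ`, an abbreviation for `φ̄ ∨ ψ`. -/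
def imp (φ ψ : MuF L 𝒳 Act V) : MuF L 𝒳 Act V := .or φ.compl ψ

/-- Bi-implication `φ ↔ ψ`. -/
def iff (φ ψ : MuF L 𝒳 Act V) : MuF L 𝒳 Act V := .and (imp φ ψ) (imp ψ φ)

variable [DecidableEq V]

/-- Substitution `φ[ψ/X]` of `ψ` for all free occurrences of the propositional
variable `X` (and of `ψ̄` for all free occurrences of its complement). -/
def subst (X : V ⊕ V) (ψ : MuF L 𝒳 Act V) : MuF L 𝒳 Act V → MuF L 𝒳 Act V
  | .lit p => .lit p
  | .var Y => if Y = X then ψ else if Y = bar X then ψ.compl else .var Y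
  | .or φ₁ φ₂ => .or (subst X ψ φ₁) (subst X ψ φ₂)
  | .and φ₁ φ₂ => .and (subst X ψ φ₁) (subst X ψ φ₂)
  | .dia a φ => .dia a (subst X ψ φ)
  | .box a φ => .box a (subst X ψ φ)
  | .mu Y φ => if X = Y ∨ X = bar Y then .mu Y φ else .mu Y (subst X ψ φ)
  | .nu Y φ => if X = Y ∨ X = bar Y then .nu Y φ else .nu Y (subst X ψ φ)

/-- `X` is free for `ψ` in `φ`: no free occurrence of `X` in `φ` is in the scope of a
fixpoint operator binding a free propositional variable of `ψ`. -/
def FreeFor (X : V ⊕ V) (ψ : MuF L 𝒳 Act V) : MuF L 𝒳 Act V → Prop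
  | .lit _ => True
  | .var _ => True
  | .or φ₁ φ₂ => FreeFor X ψ φ₁ ∧ FreeFor X ψ φ₂
  | .and φ₁ φ₂ => FreeFor X ψ φ₁ ∧ FreeFor X ψ φ₂
  | .dia _ φ => FreeFor X ψ φ
  | .box _ φ => FreeFor X ψ φ
  | .mu Y φ => X = Y ∨ X = bar Y ∨
      (((X ∈ φ.freeVars ∨ bar X ∈ φ.freeVars) → (Y ∉ ψ.freeVars ∧ bar Y ∉ ψ.freeVars)) ∧
        FreeFor X ψ φ)
  | .nu Y φ => X = Y ∨ X = bar Y ∨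
      (((X ∈ φ.freeVars ∨ bar X ∈ φ.freeVars) → (Y ∉ ψ.freeVars ∧ bar Y ∉ ψ.freeVars)) ∧
        FreeFor X ψ φ)

end MuF

/-! ## Semantics of the first-order modal μ-calculus -/

section MuSem

variable {L : Language} {𝒳 Act V : Type*} {M : Type*} [L.Structure M] [DecidableEq V]

/-- The extension of a valuation `Ω : 𝒱 → 𝒫(𝒮)` to barred propositional variables,
with `Ω(X̄) = 𝒮 ∖ Ω(X)`. -/
def barVal (Ω : V → Set (𝒳 → M)) : V ⊕ V → Set (𝒳 → M) :=
  Sum.elim Ω (fun x => (Ω x)ᶜ)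

/-- The modified valuation `Ω[E/X]` for `X ∈ 𝒱̄`. -/
def modif (Ω : V → Set (𝒳 → M)) : V ⊕ V → Set (𝒳 → M) → V → Set (𝒳 → M)
  | .inl x, E => Function.update Ω x E
  | .inr x, E => Function.update Ω x Eᶜ

variable (tr : Act → (𝒳 → M) → (𝒳 → M) → Prop)

/-- Denotational semantics of `Lμ_𝒱`-formulas. -/
def MuF.sem : MuF L 𝒳 Act V → (V → Set (𝒳 → M)) → Set (𝒳 → M)
  | .lit p, _ => p.sem
  | .var X, Ω => barVal Ω X
  | .or φ ψ, Ω => φ.sem Ω ∪ ψ.sem Ω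
  | .and φ ψ, Ω => φ.sem Ω ∩ ψ.sem Ω
  | .dia a φ, Ω => {ω | ∃ ν, tr a ω ν ∧ ν ∈ φ.sem Ω}
  | .box a φ, Ω => {ω | ∀ ν, tr a ω ν → ν ∈ φ.sem Ω}
  | .mu X φ, Ω => ⋂₀ {D | φ.sem (modif Ω X D) ⊆ D}
  | .nu X φ, Ω => ⋃₀ {D | D ⊆ φ.sem (modif Ω X D)}

end MuSem

/-! ## Syntax of first-order game logic -/

universe uL vL u𝒳 uA uV

mutual
/-- Formulas of first-order game logic `GL_𝒱`. -/
inductive GLF (L : Language) (𝒳 : Type u𝒳) (Act : Type uA) (V : Type uV) where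
  | lit (p : Lit L 𝒳)
  | var (X : V)
  | not (φ : GLF L 𝒳 Act V)
  | or (φ₁ φ₂ : GLF L 𝒳 Act V)
  | dia (γ : GLG L 𝒳 Act V) (φ : GLF L 𝒳 Act V)

/-- Games of first-order game logic `GL_𝒱`. -/
inductive GLG (L : Language) (𝒳 : Type u𝒳) (Act : Type uA) (V : Type uV) where
  | act (a : Act)
  | test (φ : GLF L 𝒳 Act V)
  | choice (γ₁ γ₂ : GLG L 𝒳 Act V)
  | seq (γ₁ γ₂ : GLG L 𝒳 Act V)
  | star (γ : GLG L 𝒳 Act V)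
  | dual (γ : GLG L 𝒳 Act V)
end

section GLDefs

variable {L : Language} {𝒳 Act V : Type*}

mutual
/-- Propositional variables occurring in a game-logic formula. -/
def GLF.pvars : GLF L 𝒳 Act V → Set V
  | .lit _ => ∅
  | .var X => {X}
  | .not φ => φ.pvars
  | .or φ ψ => φ.pvars ∪ ψ.pvars
  | .dia γ φ => γ.pvars ∪ φ.pvars

/-- Propositional variables occurring in a game. -/
def GLG.pvars : GLG L 𝒳 Act V → Set V
  | .act _ => ∅
  | .test φ => φ.pvars
  | .choice γ₁ γ₂ => γ₁.pvars ∪ γ₂.pvars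
  | .seq γ₁ γ₂ => γ₁.pvars ∪ γ₂.pvars
  | .star γ => γ.pvars
  | .dual γ => γ.pvars
end

mutual
/-- Transition symbols occurring in a game-logic formula. -/
def GLF.acts : GLF L 𝒳 Act V → Set Act
  | .lit _ => ∅
  | .var _ => ∅
  | .not φ => φ.acts
  | .or φ ψ => φ.acts ∪ ψ.acts
  | .dia γ φ => γ.acts ∪ φ.acts

/-- Transition symbols occurring in a game. -/
def GLG.acts : GLG L 𝒳 Act V → Set Act
  | .act a => {a}
  | .test φ => φ.acts
  | .choice γ₁ γ₂ => γ₁.acts ∪ γ₂.acts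
  | .seq γ₁ γ₂ => γ₁.acts ∪ γ₂.acts
  | .star γ => γ.acts
  | .dual γ => γ.acts
end

variable [DecidableEq V]

mutual
/-- Substitution of the game-logic formula `χ` for the propositional variable `X`
(everywhere, including inside tests of games). -/
def GLF.psub (X : V) (χ : GLF L 𝒳 Act V) : GLF L 𝒳 Act V → GLF L 𝒳 Act V
  | .lit p => .lit p
  | .var Y => if Y = X then χ else .var Y
  | .not φ => .not (GLF.psub X χ φ)
  | .or φ ψ => .or (GLF.psub X χ φ) (GLF.psub X χ ψ)
  | .dia γ φ => .dia (GLG.psub X χ γ) (GLF.psub X χ φ)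

def GLG.psub (X : V) (χ : GLF L 𝒳 Act V) : GLG L 𝒳 Act V → GLG L 𝒳 Act V
  | .act a => .act a
  | .test φ => .test (GLF.psub X χ φ)
  | .choice γ₁ γ₂ => .choice (GLG.psub X χ γ₁) (GLG.psub X χ γ₂)
  | .seq γ₁ γ₂ => .seq (GLG.psub X χ γ₁) (GLG.psub X χ γ₂)
  | .star γ => .star (GLG.psub X χ γ)
  | .dual γ => .dual (GLG.psub X χ γ)
end

/-- Implication in game logic. -/
def GLF.gimp (φ ψ : GLF L 𝒳 Act V) : GLF L 𝒳 Act V := .or (.not φ) ψ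

/-- Conjunction in game logic. -/
def GLF.gand (φ ψ : GLF L 𝒳 Act V) : GLF L 𝒳 Act V := .not (.or (.not φ) (.not ψ))

/-- Bi-implication in game logic. -/
def GLF.giff (φ ψ : GLF L 𝒳 Act V) : GLF L 𝒳 Act V := GLF.gand (GLF.gimp φ ψ) (GLF.gimp ψ φ)

end GLDefs

/-! ## Semantics of first-order game logic -/

section GLSem

variable {L : Language} {𝒳 Act V : Type*} {M : Type*} [L.Structure M]
variable (tr : Act → (𝒳 → M) → (𝒳 → M) → Prop)

mutual
/-- Denotational semantics of game-logic formulas. -/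
def GLF.sem : GLF L 𝒳 Act V → (V → Set (𝒳 → M)) → Set (𝒳 → M)
  | .lit p, _ => p.sem
  | .var X, Ω => Ω X
  | .not φ, Ω => (φ.sem Ω)ᶜ
  | .or φ ψ, Ω => φ.sem Ω ∪ ψ.sem Ω
  | .dia γ φ, Ω => γ.sem Ω (φ.sem Ω)

/-- Denotational semantics of games: `γ.sem tr Ω D` is the set of states from which
Angel has a winning strategy in `γ` to reach `D`. -/
def GLG.sem : GLG L 𝒳 Act V → (V → Set (𝒳 → M)) → Set (𝒳 → M) → Set (𝒳 → M)
  | .act a, _, D => {ω | ∃ ν, tr a ω ν ∧ ν ∈ D}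
  | .test φ, Ω, D => φ.sem Ω ∩ D
  | .choice γ₁ γ₂, Ω, D => γ₁.sem Ω D ∪ γ₂.sem Ω D
  | .seq γ₁ γ₂, Ω, D => γ₁.sem Ω (γ₂.sem Ω D)
  | .star γ, Ω, D => ⋂₀ {Z | D ∪ γ.sem Ω Z ⊆ Z}
  | .dual γ, Ω, D => (γ.sem Ω Dᶜ)ᶜ
end

end GLSem


/-! ## The translation ♯ from game logic into the μ-calculus -/

section Sharp

variable {L : Language} {𝒳 Act V : Type*}

/-- The translation `♯` of `GL_𝒱`-formulas into `Lμ_𝒱`-formulas, as a relation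
(the clause for `⟨γ*⟩φ` chooses a fresh propositional variable `X`). -/
inductive Sharp : GLF L 𝒳 Act V → MuF L 𝒳 Act V → Prop
  | lit (p) : Sharp (.lit p) (.lit p)
  | var (X) : Sharp (.var X) (.var (Sum.inl X))
  | not {φ m} : Sharp φ m → Sharp (.not φ) m.compl
  | or {φ₁ φ₂ m₁ m₂} : Sharp φ₁ m₁ → Sharp φ₂ m₂ → Sharp (.or φ₁ φ₂) (.or m₁ m₂)
  | act {a φ m} : Sharp φ m → Sharp (.dia (.act a) φ) (.dia a m)
  | test {φ₁ φ₂ m₁ m₂} : Sharp φ₁ m₁ → Sharp φ₂ m₂ → Sharp (.dia (.test φ₁) φ₂) (.and m₁ m₂)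
  | choice {γ₁ γ₂ φ m₁ m₂} : Sharp (.dia γ₁ φ) m₁ → Sharp (.dia γ₂ φ) m₂ →
      Sharp (.dia (.choice γ₁ γ₂) φ) (.or m₁ m₂)
  | seq {γ₁ γ₂ φ m} : Sharp (.dia γ₁ (.dia γ₂ φ)) m → Sharp (.dia (.seq γ₁ γ₂) φ) m
  | dual {γ φ m} : Sharp (.dia γ (.not φ)) m → Sharp (.dia (.dual γ) φ) m.compl
  | star {γ φ X m} : X ∉ φ.pvars → X ∉ γ.pvars →
      Sharp (.or φ (.dia γ (.var X))) m →
      Sharp (.dia (.star γ) φ) (.mu (Sum.inl X) m)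

end Sharp

/-! ## The translation of μ-calculus formulas into games (dictionaries) -/

section Flat

variable {L : Language} {𝒳 Act V : Type*} [DecidableEq V]

/-- A barred propositional variable as a game logic formula (`X̄` is `¬X`). -/
def gvar : V ⊕ V → GLF L 𝒳 Act V := Sum.elim .var (fun x => .not (.var x))

/-- A canonical true game-logic formula `⊤`. -/
def glTrue (ℓ : 𝒳) : GLF L 𝒳 Act V := .lit (.eq (.var ℓ) (.var ℓ))

/-- A canonical false game-logic formula `⊥`. -/
def glFalse (ℓ : 𝒳) : GLF L 𝒳 Act V := .lit (.ne (.var ℓ) (.var ℓ))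

/-- The dictionary `ϑ[X]`, treating `X` (and `X̄`) as bound. -/
def dictUp (ϑ : V → Bool) (X : V ⊕ V) : V → Bool := Function.update ϑ (unbar X) true

/-- A dictionary is compatible with a formula iff it takes value `0` on all
propositional variables bound in the formula. -/
def Compat (ϑ : V → Bool) (φ : MuF L 𝒳 Act V) : Prop :=
  ∀ X ∈ φ.boundVars, ϑ (unbar X) = false

/-- Demonic choice `γ₁ ∩ γ₂`. -/
def GLG.dchoice (γ₁ γ₂ : GLG L 𝒳 Act V) : GLG L 𝒳 Act V := .dual (.choice (.dual γ₁) (.dual γ₂))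

/-- Demonic repetition `γ^×`. -/
def GLG.cross (γ : GLG L 𝒳 Act V) : GLG L 𝒳 Act V := .dual (.star (.dual γ))

/-- The translation `φ^ϑ` of an `Lμ_𝒱`-formula into a `GL_𝒱`-game, relative to a
dictionary `ϑ`, a control variable `ℓ`, constant symbols `c_X`, and the deterministic
assignment transition symbols `asn`. -/
def trGame (ℓ : 𝒳) (c : V ⊕ V → L.Constants) (asn : 𝒳 → L.Term 𝒳 → Act) :
    MuF L 𝒳 Act V → (V → Bool) → GLG L 𝒳 Act V
  | .lit p, _ => .seq (.test (.lit p)) (.dual (.test (glFalse ℓ)))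
  | .var X, ϑ =>
      if ϑ (unbar X) then .act (asn ℓ (Language.Constants.term (c X)))
      else .seq (.test (gvar X)) (.dual (.test (glFalse ℓ)))
  | .or φ ψ, ϑ => .choice (trGame ℓ c asn φ ϑ) (trGame ℓ c asn ψ ϑ)
  | .and φ ψ, ϑ => GLG.dchoice (trGame ℓ c asn φ ϑ) (trGame ℓ c asn ψ ϑ)
  | .dia a φ, ϑ => .seq (.act a) (trGame ℓ c asn φ ϑ)
  | .box a φ, ϑ => .seq (.dual (.act a)) (trGame ℓ c asn φ ϑ)
  | .mu X φ, ϑ => .seq (.act (asn ℓ (Language.Constants.term (c X))))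
      (.seq (.star (.seq (.test (.lit (.eq (.var ℓ) (Language.Constants.term (c X)))))
                         (trGame ℓ c asn φ (dictUp ϑ X))))
            (.test (.lit (.ne (.var ℓ) (Language.Constants.term (c X))))))
  | .nu X φ, ϑ => .seq (.act (asn ℓ (Language.Constants.term (c X))))
      (.seq (GLG.cross (.seq (.dual (.test (.lit (.eq (.var ℓ) (Language.Constants.term (c X))))))
                             (trGame ℓ c asn φ (dictUp ϑ X))))
            (.dual (.test (.lit (.ne (.var ℓ) (Language.Constants.term (c X)))))))

/-- The translation `ψ♭ = ⟨ψ^η⟩⊤` of an `Lμ`-formula into a `GL`-formula,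
where `η` is the dictionary that is `0` everywhere. -/
def flatF (ℓ : 𝒳) (c : V ⊕ V → L.Constants) (asn : 𝒳 → L.Term 𝒳 → Act)
    (ψ : MuF L 𝒳 Act V) : GLF L 𝒳 Act V :=
  .dia (trGame ℓ c asn ψ (fun _ => false)) (glTrue ℓ)

/-- The object variables occurring (in literals) in a μ-calculus formula. -/
def MuF.ovars : MuF L 𝒳 Act V → Set 𝒳
  | .lit p => p.ovars
  | .var _ => ∅
  | .or φ ψ => φ.ovars ∪ ψ.ovars
  | .and φ ψ => φ.ovars ∪ ψ.ovars
  | .dia _ φ => φ.ovars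
  | .box _ φ => φ.ovars
  | .mu _ φ => φ.ovars
  | .nu _ φ => φ.ovars

variable {M : Type*} [DecidableEq 𝒳]

/-- Object variable `y` is independent of transition `a` under interpretation `tr`:
whenever `(ω,ν) ∈ ⟦a⟧` then also `(ω[b/y],ν[b/y]) ∈ ⟦a⟧`. -/
def IndepAct (tr : Act → (𝒳 → M) → (𝒳 → M) → Prop) (y : 𝒳) (a : Act) : Prop :=
  ∀ (b : M) ω ν, tr a ω ν → tr a (Function.update ω y b) (Function.update ν y b)

/-- A valuation is independent of the object variable `y`. -/
def IndepVal (y : 𝒳) (Ω : V → Set (𝒳 → M)) : Prop :=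
  ∀ (X : V) (b : M) (ω : 𝒳 → M), ω ∈ Ω X ↔ Function.update ω y b ∈ Ω X

end Flat

/-! ## Signatures with deterministic and nondeterministic assignments -/

/-- Transition symbols of a signature with deterministic and nondeterministic
assignments: base symbols from `A₀`, deterministic assignments `x := θ`, and
nondeterministic assignments `x := *`. -/
inductive CAct (L : Language) (𝒳 : Type u𝒳) (A₀ : Type uA) where
  | base (a : A₀)
  | asn (x : 𝒳) (θ : L.Term 𝒳)
  | rand (x : 𝒳)

section CActDefs

variable {L : Language} {𝒳 A₀ : Type*} [DecidableEq 𝒳]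

/-- Substitution of the term `θ` for the object variable `x` in a term. -/
def tsub (x : 𝒳) (θ : L.Term 𝒳) (t : L.Term 𝒳) : L.Term 𝒳 :=
  t.subst (fun y => if y = x then θ else .var y)

/-- Swapping the object variables `x` and `y` in a term. -/
def tswap (x y : 𝒳) (t : L.Term 𝒳) : L.Term 𝒳 := t.relabel (Equiv.swap x y)

/-- Substitution in literals. -/
def Lit.osub (x : 𝒳) (θ : L.Term 𝒳) : Lit L 𝒳 → Lit L 𝒳
  | .eq t₁ t₂ => .eq (tsub x θ t₁) (tsub x θ t₂)
  | .ne t₁ t₂ => .ne (tsub x θ t₁) (tsub x θ t₂)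
  | .rel R ts => .rel R (fun i => tsub x θ (ts i))
  | .nrel R ts => .nrel R (fun i => tsub x θ (ts i))

/-- Swapping object variables in literals. -/
def Lit.oswap (x y : 𝒳) : Lit L 𝒳 → Lit L 𝒳
  | .eq t₁ t₂ => .eq (tswap x y t₁) (tswap x y t₂)
  | .ne t₁ t₂ => .ne (tswap x y t₁) (tswap x y t₂)
  | .rel R ts => .rel R (fun i => tswap x y (ts i))
  | .nrel R ts => .nrel R (fun i => tswap x y (ts i))

namespace CAct

/-- Whether the transition binds (assigns) the object variable `x`. -/
def bindsB (x : 𝒳) : CAct L 𝒳 A₀ → Bool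
  | .base _ => false
  | .asn y _ => decide (y = x)
  | .rand y => decide (y = x)

/-- Substitution of `θ` for `x` in a transition symbol. -/
def osub (x : 𝒳) (θ : L.Term 𝒳) : CAct L 𝒳 A₀ → CAct L 𝒳 A₀
  | .base a => .base a
  | .asn y η => .asn y (tsub x θ η)
  | .rand y => .rand y

/-- Renaming `x ↔ y` in a transition symbol, using the signature's closure `sw`
of base transition symbols under renaming. -/
def oswap (sw : 𝒳 → 𝒳 → A₀ → A₀) (x y : 𝒳) : CAct L 𝒳 A₀ → CAct L 𝒳 A₀
  | .base a => .base (sw x y a)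
  | .asn z η => .asn (Equiv.swap x y z) (tswap x y η)
  | .rand z => .rand (Equiv.swap x y z)

/-- The object variables a transition symbol may depend on, given an interface
`fvB` for base transition symbols. -/
def ovarsF (fvB : A₀ → Set 𝒳) : CAct L 𝒳 A₀ → Set 𝒳
  | .base b => fvB b
  | .asn x θ => {x} ∪ tvars θ
  | .rand x => {x}

/-- The object variables bound (assigned) by a transition symbol. -/
def obinds : CAct L 𝒳 A₀ → Set 𝒳
  | .base _ => ∅
  | .asn x _ => {x}
  | .rand x => {x}

/-- The base transition symbols of a transition symbol. -/
def bases : CAct L 𝒳 A₀ → Set A₀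
  | .base a => {a}
  | .asn _ _ => ∅
  | .rand _ => ∅

end CAct

/-- Interpretation of transition symbols in an assignment and quantifier structure:
base symbols are interpreted by `trb`, deterministic assignments update the assigned
variable to the value of the term, nondeterministic assignments update it arbitrarily. -/
def ctrans {M : Type*} [L.Structure M] (trb : A₀ → (𝒳 → M) → (𝒳 → M) → Prop) :
    CAct L 𝒳 A₀ → (𝒳 → M) → (𝒳 → M) → Prop
  | .base b => trb b
  | .asn x θ => fun ω ν => ν = Function.update ω x (θ.realize ω)
  | .rand x => fun ω ν => ∃ e : M, ν = Function.update ω x e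

end CActDefs

/-! ## Syntactic operations on μ-calculus formulas over such signatures -/

section MuCalcOps

variable {L : Language} {𝒳 V A₀ : Type*} [DecidableEq 𝒳] [DecidableEq V]

namespace MuF

/-- Substitution `φ[θ/x]` of a term for an object variable. Base transition symbols
are unaffected; substitution stops under transitions binding `x`. -/
def osub (x : 𝒳) (θ : L.Term 𝒳) :
    MuF L 𝒳 (CAct L 𝒳 A₀) V → MuF L 𝒳 (CAct L 𝒳 A₀) V
  | .lit p => .lit (p.osub x θ)
  | .var X => .var X
  | .or φ ψ => .or (osub x θ φ) (osub x θ ψ)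
  | .and φ ψ => .and (osub x θ φ) (osub x θ ψ)
  | .dia a φ => .dia (a.osub x θ) (if a.bindsB x then φ else osub x θ φ)
  | .box a φ => .box (a.osub x θ) (if a.bindsB x then φ else osub x θ φ)
  | .mu X φ => .mu X (osub x θ φ)
  | .nu X φ => .nu X (osub x θ φ)

/-- Renaming `φₓʸ`, swapping the object variables `x` and `y` throughout. -/
def oswap (sw : 𝒳 → 𝒳 → A₀ → A₀) (x y : 𝒳) :
    MuF L 𝒳 (CAct L 𝒳 A₀) V → MuF L 𝒳 (CAct L 𝒳 A₀) V
  | .lit p => .lit (p.oswap x y)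
  | .var X => .var X
  | .or φ ψ => .or (oswap sw x y φ) (oswap sw x y ψ)
  | .and φ ψ => .and (oswap sw x y φ) (oswap sw x y ψ)
  | .dia a φ => .dia (a.oswap sw x y) (oswap sw x y φ)
  | .box a φ => .box (a.oswap sw x y) (oswap sw x y φ)
  | .mu X φ => .mu X (oswap sw x y φ)
  | .nu X φ => .nu X (oswap sw x y φ)

/-- The object variables a formula may depend on. -/
def ovarsF (fvB : A₀ → Set 𝒳) : MuF L 𝒳 (CAct L 𝒳 A₀) V → Set 𝒳
  | .lit p => p.ovars
  | .var _ => ∅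
  | .or φ ψ => ovarsF fvB φ ∪ ovarsF fvB ψ
  | .and φ ψ => ovarsF fvB φ ∪ ovarsF fvB ψ
  | .dia a φ => a.ovarsF fvB ∪ ovarsF fvB φ
  | .box a φ => a.ovarsF fvB ∪ ovarsF fvB φ
  | .mu _ φ => ovarsF fvB φ
  | .nu _ φ => ovarsF fvB φ

/-- The object variables bound by some transition occurring in the formula. -/
def obindsC : MuF L 𝒳 (CAct L 𝒳 A₀) V → Set 𝒳
  | .lit _ => ∅
  | .var _ => ∅
  | .or φ ψ => obindsC φ ∪ obindsC ψ
  | .and φ ψ => obindsC φ ∪ obindsC ψ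
  | .dia a φ => a.obinds ∪ obindsC φ
  | .box a φ => a.obinds ∪ obindsC φ
  | .mu _ φ => obindsC φ
  | .nu _ φ => obindsC φ

/-- The base transition symbols occurring in a formula. -/
def baseActs : MuF L 𝒳 (CAct L 𝒳 A₀) V → Set A₀
  | .lit _ => ∅
  | .var _ => ∅
  | .or φ ψ => baseActs φ ∪ baseActs ψ
  | .and φ ψ => baseActs φ ∪ baseActs ψ
  | .dia a φ => a.bases ∪ baseActs φ
  | .box a φ => a.bases ∪ baseActs φ
  | .mu _ φ => baseActs φ
  | .nu _ φ => baseActs φ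

end MuF

/-- Admissibility of the substitution `φ[θ/x]` for the axiom `∃I`. -/
def OAdm (fvB : A₀ → Set 𝒳) (x : 𝒳) (θ : L.Term 𝒳)
    (φ : MuF L 𝒳 (CAct L 𝒳 A₀) V) : Prop :=
  x ∉ φ.ovarsF fvB ∨
    (φ.baseActs = ∅ ∧ (∀ y ∈ tvars θ, y ∉ φ.obindsC) ∧ φ.freeVars = ∅)

end MuCalcOps

/-! ## Propositional tautologies and equality axioms for the μ-calculus -/

section MuAx

variable {L : Language} {𝒳 Act V : Type*} [DecidableEq V]

namespace MuF

/-- Purely propositional formulas: built from propositional variables by `∨` and `∧`. -/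
def PureProp : MuF L 𝒳 Act V → Prop
  | .var _ => True
  | .or φ ψ => PureProp φ ∧ PureProp ψ
  | .and φ ψ => PureProp φ ∧ PureProp ψ
  | _ => False

/-- Evaluation of a purely propositional formula under a Boolean assignment,
interpreting bars as negation. -/
def propEval (v : V → Prop) : MuF L 𝒳 Act V → Prop
  | .var (.inl X) => v X
  | .var (.inr X) => ¬ v X
  | .or φ ψ => propEval v φ ∨ propEval v ψ
  | .and φ ψ => propEval v φ ∧ propEval v ψ
  | _ => False

end MuF

/-- Propositional tautologies: the smallest set of formulas closed under substitution
of propositional variables that contains all valid purely propositional formulas. -/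
inductive MuTaut : MuF L 𝒳 Act V → Prop
  | base {φ : MuF L 𝒳 Act V} : φ.PureProp → (∀ v : V → Prop, φ.propEval v) → MuTaut φ
  | subst {φ : MuF L 𝒳 Act V} (X : V ⊕ V) (ψ : MuF L 𝒳 Act V) :
      MuTaut φ → MuTaut (MuF.subst X ψ φ)

/-- Iterated implication `φ₁ → (φ₂ → ⋯ → χ)`. -/
def impChain : List (MuF L 𝒳 Act V) → MuF L 𝒳 Act V → MuF L 𝒳 Act V
  | [], χ => χ
  | φ :: t, χ => φ.imp (impChain t χ)

/-- The first-order equality axioms: equality is a congruence with respect to the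
function and predicate symbols of the first-order signature. -/
inductive MuEqAx : MuF L 𝒳 Act V → Prop
  | refl (t : L.Term 𝒳) : MuEqAx (.lit (.eq t t))
  | symm (t₁ t₂ : L.Term 𝒳) : MuEqAx ((MuF.lit (.eq t₁ t₂)).imp (.lit (.eq t₂ t₁)))
  | trans (t₁ t₂ t₃ : L.Term 𝒳) :
      MuEqAx ((MuF.lit (.eq t₁ t₂)).imp ((MuF.lit (.eq t₂ t₃)).imp (.lit (.eq t₁ t₃))))
  | congFun {n : ℕ} (f : L.Functions n) (ts ts' : Fin n → L.Term 𝒳) :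
      MuEqAx (impChain ((List.finRange n).map fun i => MuF.lit (.eq (ts i) (ts' i)))
        (.lit (.eq (Language.Term.func f ts) (Language.Term.func f ts'))))
  | congRel {n : ℕ} (R : L.Relations n) (ts ts' : Fin n → L.Term 𝒳) :
      MuEqAx (impChain ((List.finRange n).map fun i => MuF.lit (.eq (ts i) (ts' i)))
        ((MuF.lit (.rel R ts)).imp (.lit (.rel R ts'))))

/-- Renaming of bound propositional variables (α-equivalence). -/
inductive AEq : MuF L 𝒳 Act V → MuF L 𝒳 Act V → Prop
  | refl (φ) : AEq φ φ
  | symm {φ ψ} : AEq φ ψ → AEq ψ φ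
  | trans {φ ψ χ} : AEq φ ψ → AEq ψ χ → AEq φ χ
  | or {φ₁ φ₂ ψ₁ ψ₂} : AEq φ₁ ψ₁ → AEq φ₂ ψ₂ → AEq (.or φ₁ φ₂) (.or ψ₁ ψ₂)
  | and {φ₁ φ₂ ψ₁ ψ₂} : AEq φ₁ ψ₁ → AEq φ₂ ψ₂ → AEq (.and φ₁ φ₂) (.and ψ₁ ψ₂)
  | dia (a) {φ ψ} : AEq φ ψ → AEq (.dia a φ) (.dia a ψ)
  | box (a) {φ ψ} : AEq φ ψ → AEq (.box a φ) (.box a ψ)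
  | mu (X) {φ ψ} : AEq φ ψ → AEq (.mu X φ) (.mu X ψ)
  | nu (X) {φ ψ} : AEq φ ψ → AEq (.nu X φ) (.nu X ψ)
  | muRename {X Y : V ⊕ V} {φ : MuF L 𝒳 Act V} : Y ∉ φ.mentions → bar Y ∉ φ.mentions →
      AEq (.mu X φ) (.mu Y (MuF.subst X (.var Y) φ))
  | nuRename {X Y : V ⊕ V} {φ : MuF L 𝒳 Act V} : Y ∉ φ.mentions → bar Y ∉ φ.mentions →
      AEq (.nu X φ) (.nu Y (MuF.subst X (.var Y) φ))

end MuAx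

/-! ## The Hilbert-style proof calculus for the first-order modal μ-calculus -/

section MuCalc

variable {L : Language} {𝒳 V A₀ : Type*} [DecidableEq 𝒳] [DecidableEq V]

/-- Provability in the `Lμ`-calculus from the theory `T`, by a derivation all of whose
formulas belong to `S`. The calculus has rules `MP`, `Mₐ` and `FPμ`, the axioms
`μ` (unfolding), `∃I`, `V`, `⟨:=⟩`, all propositional tautologies and equality axioms,
and permits renaming of bound propositional variables. -/
inductive MuPrvIn (sw : 𝒳 → 𝒳 → A₀ → A₀) (fvB : A₀ → Set 𝒳)
    (S : Set (MuF L 𝒳 (CAct L 𝒳 A₀) V)) (T : Set (MuF L 𝒳 (CAct L 𝒳 A₀) V)) :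
    MuF L 𝒳 (CAct L 𝒳 A₀) V → Prop
  | hyp {φ} : φ ∈ T → φ ∈ S → MuPrvIn sw fvB S T φ
  | taut {φ} : MuTaut φ → φ.WF → φ ∈ S → MuPrvIn sw fvB S T φ
  | eqax {φ} : MuEqAx φ → φ ∈ S → MuPrvIn sw fvB S T φ
  | mufix {X φ} : (MuF.mu X φ).WF → MuF.FreeFor X (.mu X φ) φ →
      (MuF.subst X (.mu X φ) φ).iff (.mu X φ) ∈ S →
      MuPrvIn sw fvB S T ((MuF.subst X (.mu X φ) φ).iff (.mu X φ))
  | existsI {x θ φ} : φ.WF → OAdm fvB x θ φ →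
      (φ.osub x θ).imp (.dia (.rand x) φ) ∈ S →
      MuPrvIn sw fvB S T ((φ.osub x θ).imp (.dia (.rand x) φ))
  | vac {x ψ} : ψ.WF → x ∉ ψ.ovarsF fvB → ψ.freeVars = ∅ →
      (MuF.dia (.rand x) ψ).imp ψ ∈ S →
      MuPrvIn sw fvB S T ((MuF.dia (.rand x) ψ).imp ψ)
  | asgn {x y : 𝒳} {θ : L.Term 𝒳} {φ} : φ.WF → y ≠ x → y ∉ tvars θ →
      y ∉ φ.ovarsF fvB → φ.freeVars = ∅ →
      (MuF.dia (.asn x θ) φ).iff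
        (.dia (.rand y) (.and (.lit (.eq (.var y) θ)) (φ.oswap sw x y))) ∈ S →
      MuPrvIn sw fvB S T ((MuF.dia (.asn x θ) φ).iff
        (.dia (.rand y) (.and (.lit (.eq (.var y) θ)) (φ.oswap sw x y))))
  | mp {φ ψ} : MuPrvIn sw fvB S T (ψ.imp φ) → MuPrvIn sw fvB S T ψ → φ ∈ S →
      MuPrvIn sw fvB S T φ
  | mono (a : CAct L 𝒳 A₀) {ψ φ} : MuPrvIn sw fvB S T (ψ.imp φ) →
      (MuF.dia a ψ).imp (.dia a φ) ∈ S →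
      MuPrvIn sw fvB S T ((MuF.dia a ψ).imp (.dia a φ))
  | fpmu {X ψ φ} : MuF.FreeFor X φ ψ → (MuF.mu X ψ).WF →
      MuPrvIn sw fvB S T ((MuF.subst X φ ψ).imp φ) → (MuF.mu X ψ).imp φ ∈ S →
      MuPrvIn sw fvB S T ((MuF.mu X ψ).imp φ)
  | alpha {φ ψ} : AEq φ ψ → MuPrvIn sw fvB S T φ → ψ ∈ S → MuPrvIn sw fvB S T ψ

/-- Provability `T ⊢_Lμ φ` in the `Lμ`-calculus. -/
abbrev MuPrv (sw : 𝒳 → 𝒳 → A₀ → A₀) (fvB : A₀ → Set 𝒳)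
    (T : Set (MuF L 𝒳 (CAct L 𝒳 A₀) V)) : MuF L 𝒳 (CAct L 𝒳 A₀) V → Prop :=
  MuPrvIn sw fvB Set.univ T

end MuCalc

/-! ## Syntactic operations on game logic formulas over assignment signatures -/

section GLCalcOps

variable {L : Language} {𝒳 V A₀ : Type*} [DecidableEq 𝒳] [DecidableEq V]

mutual
/-- Substitution `φ[θ/x]` of a term for an object variable in game logic formulas. -/
def GLF.osub (x : 𝒳) (θ : L.Term 𝒳) :
    GLF L 𝒳 (CAct L 𝒳 A₀) V → GLF L 𝒳 (CAct L 𝒳 A₀) V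
  | .lit p => .lit (p.osub x θ)
  | .var X => .var X
  | .not φ => .not (GLF.osub x θ φ)
  | .or φ ψ => .or (GLF.osub x θ φ) (GLF.osub x θ ψ)
  | .dia γ φ => .dia (GLG.osub x θ γ) (GLF.osub x θ φ)

/-- Substitution of a term for an object variable in games. -/
def GLG.osub (x : 𝒳) (θ : L.Term 𝒳) :
    GLG L 𝒳 (CAct L 𝒳 A₀) V → GLG L 𝒳 (CAct L 𝒳 A₀) V
  | .act a => .act (a.osub x θ)
  | .test φ => .test (GLF.osub x θ φ)
  | .choice γ₁ γ₂ => .choice (GLG.osub x θ γ₁) (GLG.osub x θ γ₂)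
  | .seq γ₁ γ₂ => .seq (GLG.osub x θ γ₁) (GLG.osub x θ γ₂)
  | .star γ => .star (GLG.osub x θ γ)
  | .dual γ => .dual (GLG.osub x θ γ)
end

mutual
/-- Renaming `φₓʸ`, swapping the object variables `x` and `y` throughout. -/
def GLF.oswap (sw : 𝒳 → 𝒳 → A₀ → A₀) (x y : 𝒳) :
    GLF L 𝒳 (CAct L 𝒳 A₀) V → GLF L 𝒳 (CAct L 𝒳 A₀) V
  | .lit p => .lit (p.oswap x y)
  | .var X => .var X
  | .not φ => .not (GLF.oswap sw x y φ)
  | .or φ ψ => .or (GLF.oswap sw x y φ) (GLF.oswap sw x y ψ)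
  | .dia γ φ => .dia (GLG.oswap sw x y γ) (GLF.oswap sw x y φ)

def GLG.oswap (sw : 𝒳 → 𝒳 → A₀ → A₀) (x y : 𝒳) :
    GLG L 𝒳 (CAct L 𝒳 A₀) V → GLG L 𝒳 (CAct L 𝒳 A₀) V
  | .act a => .act (a.oswap sw x y)
  | .test φ => .test (GLF.oswap sw x y φ)
  | .choice γ₁ γ₂ => .choice (GLG.oswap sw x y γ₁) (GLG.oswap sw x y γ₂)
  | .seq γ₁ γ₂ => .seq (GLG.oswap sw x y γ₁) (GLG.oswap sw x y γ₂)
  | .star γ => .star (GLG.oswap sw x y γ)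
  | .dual γ => .dual (GLG.oswap sw x y γ)
end

mutual
/-- Object variables a game logic formula may depend on. -/
def GLF.ovarsF (fvB : A₀ → Set 𝒳) : GLF L 𝒳 (CAct L 𝒳 A₀) V → Set 𝒳
  | .lit p => p.ovars
  | .var _ => ∅
  | .not φ => GLF.ovarsF fvB φ
  | .or φ ψ => GLF.ovarsF fvB φ ∪ GLF.ovarsF fvB ψ
  | .dia γ φ => GLG.ovarsF fvB γ ∪ GLF.ovarsF fvB φ

def GLG.ovarsF (fvB : A₀ → Set 𝒳) : GLG L 𝒳 (CAct L 𝒳 A₀) V → Set 𝒳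
  | .act a => a.ovarsF fvB
  | .test φ => GLF.ovarsF fvB φ
  | .choice γ₁ γ₂ => GLG.ovarsF fvB γ₁ ∪ GLG.ovarsF fvB γ₂
  | .seq γ₁ γ₂ => GLG.ovarsF fvB γ₁ ∪ GLG.ovarsF fvB γ₂
  | .star γ => GLG.ovarsF fvB γ
  | .dual γ => GLG.ovarsF fvB γ
end

mutual
/-- Object variables bound by a transition occurring in a formula. -/
def GLF.obindsC : GLF L 𝒳 (CAct L 𝒳 A₀) V → Set 𝒳
  | .lit _ => ∅
  | .var _ => ∅
  | .not φ => GLF.obindsC φ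
  | .or φ ψ => GLF.obindsC φ ∪ GLF.obindsC ψ
  | .dia γ φ => GLG.obindsC γ ∪ GLF.obindsC φ

def GLG.obindsC : GLG L 𝒳 (CAct L 𝒳 A₀) V → Set 𝒳
  | .act a => a.obinds
  | .test φ => GLF.obindsC φ
  | .choice γ₁ γ₂ => GLG.obindsC γ₁ ∪ GLG.obindsC γ₂
  | .seq γ₁ γ₂ => GLG.obindsC γ₁ ∪ GLG.obindsC γ₂
  | .star γ => GLG.obindsC γ
  | .dual γ => GLG.obindsC γ
end

mutual
/-- The base transition symbols occurring in a formula. -/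
def GLF.baseActs : GLF L 𝒳 (CAct L 𝒳 A₀) V → Set A₀
  | .lit _ => ∅
  | .var _ => ∅
  | .not φ => GLF.baseActs φ
  | .or φ ψ => GLF.baseActs φ ∪ GLF.baseActs ψ
  | .dia γ φ => GLG.baseActs γ ∪ GLF.baseActs φ

def GLG.baseActs : GLG L 𝒳 (CAct L 𝒳 A₀) V → Set A₀
  | .act a => a.bases
  | .test φ => GLF.baseActs φ
  | .choice γ₁ γ₂ => GLG.baseActs γ₁ ∪ GLG.baseActs γ₂
  | .seq γ₁ γ₂ => GLG.baseActs γ₁ ∪ GLG.baseActs γ₂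
  | .star γ => GLG.baseActs γ
  | .dual γ => GLG.baseActs γ
end

/-- Admissibility of the substitution `φ[θ/x]` in game logic. -/
def GOAdm (fvB : A₀ → Set 𝒳) (x : 𝒳) (θ : L.Term 𝒳)
    (φ : GLF L 𝒳 (CAct L 𝒳 A₀) V) : Prop :=
  x ∉ φ.ovarsF fvB ∨ (φ.baseActs = ∅ ∧ ∀ y ∈ tvars θ, y ∉ φ.obindsC)

end GLCalcOps

/-! ## Propositional tautologies and equality axioms for game logic -/

section GLAx

variable {L : Language} {𝒳 Act V : Type*} [DecidableEq V]

/-- Purely propositional game logic formulas. -/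
def GLF.pPure : GLF L 𝒳 Act V → Prop
  | .var _ => True
  | .not φ => GLF.pPure φ
  | .or φ ψ => GLF.pPure φ ∧ GLF.pPure ψ
  | _ => False

/-- Evaluation of propositional game logic formulas. -/
def GLF.pEval (v : V → Prop) : GLF L 𝒳 Act V → Prop
  | .var X => v X
  | .not φ => ¬ GLF.pEval v φ
  | .or φ ψ => GLF.pEval v φ ∨ GLF.pEval v ψ
  | _ => False

/-- Propositional tautologies of game logic: closure of the valid purely propositional
formulas under substitution of propositional variables. -/
inductive GLTaut : GLF L 𝒳 Act V → Prop
  | base {φ : GLF L 𝒳 Act V} : φ.pPure → (∀ v : V → Prop, φ.pEval v) → GLTaut φ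
  | subst {φ : GLF L 𝒳 Act V} (X : V) (ψ : GLF L 𝒳 Act V) : GLTaut φ → GLTaut (GLF.psub X ψ φ)

/-- Iterated implication in game logic. -/
def gimpChain : List (GLF L 𝒳 Act V) → GLF L 𝒳 Act V → GLF L 𝒳 Act V
  | [], χ => χ
  | φ :: t, χ => φ.gimp (gimpChain t χ)

/-- The first-order equality axioms for game logic. -/
inductive GLEqAx : GLF L 𝒳 Act V → Prop
  | refl (t : L.Term 𝒳) : GLEqAx (.lit (.eq t t))
  | symm (t₁ t₂ : L.Term 𝒳) : GLEqAx ((GLF.lit (.eq t₁ t₂)).gimp (.lit (.eq t₂ t₁)))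
  | trans (t₁ t₂ t₃ : L.Term 𝒳) :
      GLEqAx ((GLF.lit (.eq t₁ t₂)).gimp ((GLF.lit (.eq t₂ t₃)).gimp (.lit (.eq t₁ t₃))))
  | congFun {n : ℕ} (f : L.Functions n) (ts ts' : Fin n → L.Term 𝒳) :
      GLEqAx (gimpChain ((List.finRange n).map fun i => GLF.lit (.eq (ts i) (ts' i)))
        (.lit (.eq (Language.Term.func f ts) (Language.Term.func f ts'))))
  | congRel {n : ℕ} (R : L.Relations n) (ts ts' : Fin n → L.Term 𝒳) :
      GLEqAx (gimpChain ((List.finRange n).map fun i => GLF.lit (.eq (ts i) (ts' i)))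
        ((GLF.lit (.rel R ts)).gimp (.lit (.rel R ts'))))

end GLAx

/-! ## The Hilbert-style proof calculus for first-order game logic -/

section GLCalc

variable {L : Language} {𝒳 V A₀ : Type*} [DecidableEq 𝒳] [DecidableEq V]

/-- Provability `T ⊢_GL φ` in the `GL`-calculus (operating on `GL`-formulas, i.e.
formulas without propositional variables), with rules `MP`, `M`, `FP*`, the game
axioms `⟨?⟩`, `⟨∪⟩`, `⟨;⟩`, `⟨*⟩`, `⟨ᵈ⟩`, the axioms `∃I`, `V`, `⟨:=⟩`, and all
propositional tautologies and equality axioms. -/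
inductive GLPrv (sw : 𝒳 → 𝒳 → A₀ → A₀) (fvB : A₀ → Set 𝒳)
    (T : Set (GLF L 𝒳 (CAct L 𝒳 A₀) V)) : GLF L 𝒳 (CAct L 𝒳 A₀) V → Prop
  | hyp {φ} : φ ∈ T → GLPrv sw fvB T φ
  | taut {φ} : GLTaut φ → φ.pvars = ∅ → GLPrv sw fvB T φ
  | eqax {φ} : GLEqAx φ → GLPrv sw fvB T φ
  | existsI {x θ φ} : φ.pvars = ∅ → GOAdm fvB x θ φ →
      GLPrv sw fvB T ((φ.osub x θ).gimp (.dia (.act (.rand x)) φ))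
  | vac {x ψ} : ψ.pvars = ∅ → x ∉ ψ.ovarsF fvB →
      GLPrv sw fvB T ((GLF.dia (.act (.rand x)) ψ).gimp ψ)
  | asgn {x y : 𝒳} {θ : L.Term 𝒳} {φ} : φ.pvars = ∅ → y ≠ x → y ∉ tvars θ →
      y ∉ φ.ovarsF fvB →
      GLPrv sw fvB T ((GLF.dia (.act (.asn x θ)) φ).giff
        (.dia (.act (.rand y)) ((GLF.lit (.eq (.var y) θ)).gand (φ.oswap sw x y))))
  | testAx {ψ φ} : ψ.pvars = ∅ → φ.pvars = ∅ →
      GLPrv sw fvB T ((GLF.dia (.test ψ) φ).giff (ψ.gand φ))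
  | choiceAx {γ₁ γ₂ φ} : γ₁.pvars = ∅ → γ₂.pvars = ∅ → φ.pvars = ∅ →
      GLPrv sw fvB T ((GLF.dia (.choice γ₁ γ₂) φ).giff (.or (.dia γ₁ φ) (.dia γ₂ φ)))
  | seqAx {γ₁ γ₂ φ} : γ₁.pvars = ∅ → γ₂.pvars = ∅ → φ.pvars = ∅ →
      GLPrv sw fvB T ((GLF.dia (.seq γ₁ γ₂) φ).giff (.dia γ₁ (.dia γ₂ φ)))
  | starAx {γ φ} : γ.pvars = ∅ → φ.pvars = ∅ →
      GLPrv sw fvB T ((GLF.dia (.star γ) φ).giff (.or φ (.dia γ (.dia (.star γ) φ))))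
  | dualAx {γ φ} : γ.pvars = ∅ → φ.pvars = ∅ →
      GLPrv sw fvB T ((GLF.dia (.dual γ) φ).giff (.not (.dia γ (.not φ))))
  | mp {φ ψ} : GLPrv sw fvB T (ψ.gimp φ) → GLPrv sw fvB T ψ → GLPrv sw fvB T φ
  | mono (γ : GLG L 𝒳 (CAct L 𝒳 A₀) V) {ψ φ} : γ.pvars = ∅ →
      GLPrv sw fvB T (ψ.gimp φ) →
      GLPrv sw fvB T ((GLF.dia γ ψ).gimp (.dia γ φ))
  | fp {γ ψ φ} : γ.pvars = ∅ →
      GLPrv sw fvB T ((GLF.or ψ (.dia γ φ)).gimp φ) →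
      GLPrv sw fvB T ((GLF.dia (.star γ) ψ).gimp φ)

end GLCalc

/-!
Replace every free occurrence of a propositional variable `X` by the closed formula `μX.X`,
and of `X̄` by its complement `νX̄.X̄`. This closing map fixes closed formulas and commutes
with complementation, with the substitution `φ[ψ/X]` when `X` is free for `ψ` in `φ`, with
substitution and renaming of object variables, and with renaming of bound propositional
variables. Hence it sends every axiom instance to an axiom instance and every rule instance
to a rule instance, and applied formula by formula to a derivation of a closed `φ` it yields a
derivation of `φ` all of whose formulas are closed.
-/

section BarredVariables

variable {V : Type*}

@[simp] theorem bar_bar (X : V ⊕ V) : bar (bar X) = X := by cases X <;> rfl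

@[simp] theorem unbar_bar (X : V ⊕ V) : unbar (bar X) = unbar X := by cases X <;> rfl

theorem bar_ne_self (X : V ⊕ V) : bar X ≠ X := by cases X <;> simp [bar]

theorem unbar_eq_unbar_iff {W Y : V ⊕ V} : unbar W = unbar Y ↔ W = Y ∨ W = bar Y := by
  cases W <;> cases Y <;> simp [unbar, bar]

theorem mem_pair_bar_iff {W Y : V ⊕ V} :
    W ∈ ({Y, bar Y} : Set (V ⊕ V)) ↔ unbar W = unbar Y := by
  rw [unbar_eq_unbar_iff]; rfl

end BarredVariables

namespace MuF

variable {L : Language} {𝒳 Act V : Type*}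

theorem freeVars_subset_mentions (φ : MuF L 𝒳 Act V) : φ.freeVars ⊆ φ.mentions := by
  induction φ with
  | lit | var => simp [freeVars, mentions]
  | or _ _ ih₁ ih₂ | and _ _ ih₁ ih₂ => exact union_subset_union ih₁ ih₂
  | dia _ _ ih | box _ _ ih => exact ih
  | mu _ _ ih | nu _ _ ih => exact sdiff_subset.trans (ih.trans subset_union_right)

theorem freeVars_finite (φ : MuF L 𝒳 Act V) : φ.freeVars.Finite := by
  induction φ with
  | lit => exact finite_empty
  | var X => exact finite_singleton X
  | or _ _ ih₁ ih₂ | and _ _ ih₁ ih₂ => exact ih₁.union ih₂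
  | dia _ _ ih | box _ _ ih => exact ih
  | mu _ _ ih | nu _ _ ih => exact ih.sdiff

/-- `μX.X` (equivalent to falsity) for `X ∈ 𝒱` and its complement `νX̄.X̄` for `X̄`, so that
`closedVar` commutes with complementation. -/
def closedVar : V ⊕ V → MuF L 𝒳 Act V
  | .inl x => .mu (.inl x) (.var (.inl x))
  | .inr x => .nu (.inr x) (.var (.inr x))

open Classical in
noncomputable def close (B : Set V) : MuF L 𝒳 Act V → MuF L 𝒳 Act V
  | .lit p => .lit p
  | .var X => if unbar X ∈ B then .var X else closedVar X
  | .or φ ψ => .or (φ.close B) (ψ.close B)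
  | .and φ ψ => .and (φ.close B) (ψ.close B)
  | .dia a φ => .dia a (φ.close B)
  | .box a φ => .box a (φ.close B)
  | .mu X φ => .mu X (φ.close (insert (unbar X) B))
  | .nu X φ => .nu X (φ.close (insert (unbar X) B))

@[simp] theorem compl_closedVar (X : V ⊕ V) :
    (closedVar X : MuF L 𝒳 Act V).compl = closedVar (bar X) := by
  cases X <;> rfl

@[simp] theorem freeVars_closedVar (X : V ⊕ V) :
    (closedVar X : MuF L 𝒳 Act V).freeVars = ∅ := by
  cases X <;> simp [closedVar, freeVars, bar, sdiff_eq_empty]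

@[simp] theorem mentions_closedVar (X : V ⊕ V) :
    (closedVar X : MuF L 𝒳 Act V).mentions = {X} := by
  cases X <;> simp [closedVar, mentions]

theorem wf_closedVar (X : V ⊕ V) : (closedVar X : MuF L 𝒳 Act V).WF := by
  cases X <;> simp [closedVar, WF, mentions, bar]

theorem close_var_of_mem {B : Set V} {X : V ⊕ V} (h : unbar X ∈ B) :
    (var X : MuF L 𝒳 Act V).close B = var X := by
  simp [close, h]

theorem close_var_of_not_mem {B : Set V} {X : V ⊕ V} (h : unbar X ∉ B) :
    (var X : MuF L 𝒳 Act V).close B = closedVar X := by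
  simp [close, h]

theorem freeVars_close {B : Set V} {φ : MuF L 𝒳 Act V} {Y : V ⊕ V}
    (hY : Y ∈ (φ.close B).freeVars) : Y ∈ φ.freeVars ∧ unbar Y ∈ B := by
  induction φ generalizing B with
  | lit => simp [close, freeVars] at hY
  | var X =>
    by_cases h : unbar X ∈ B
    · simp_all [close_var_of_mem h, freeVars]
    · simp [close_var_of_not_mem h] at hY
  | or _ _ ih₁ ih₂ | and _ _ ih₁ ih₂ =>
    rcases hY with hY | hY
    · exact ⟨Or.inl (ih₁ hY).1, (ih₁ hY).2⟩
    · exact ⟨Or.inr (ih₂ hY).1, (ih₂ hY).2⟩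
  | dia _ _ ih | box _ _ ih => exact ih hY
  | mu X _ ih | nu X _ ih =>
    obtain ⟨hY, hYX⟩ := hY
    obtain ⟨hφ, hB⟩ := ih hY
    rw [mem_pair_bar_iff] at hYX
    exact ⟨⟨hφ, by rwa [mem_pair_bar_iff]⟩, (mem_insert_iff.mp hB).resolve_left hYX⟩

theorem freeVars_close_subset (B : Set V) (φ : MuF L 𝒳 Act V) :
    (φ.close B).freeVars ⊆ φ.freeVars :=
  fun _ hY => (freeVars_close hY).1

@[simp] theorem freeVars_close_empty (φ : MuF L 𝒳 Act V) : (φ.close ∅).freeVars = ∅ :=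
  eq_empty_of_forall_notMem fun _ hY => (freeVars_close hY).2

theorem mentions_close_subset (B : Set V) (φ : MuF L 𝒳 Act V) :
    (φ.close B).mentions ⊆ φ.mentions := by
  induction φ generalizing B with
  | lit => simp [close, mentions]
  | var X => by_cases h : unbar X ∈ B <;> simp [close, h, mentions]
  | or _ _ ih₁ ih₂ | and _ _ ih₁ ih₂ => exact union_subset_union (ih₁ B) (ih₂ B)
  | dia _ _ ih | box _ _ ih => exact ih B
  | mu _ _ ih | nu _ _ ih => exact union_subset_union subset_rfl (ih _)

theorem WF.close {φ : MuF L 𝒳 Act V} (h : φ.WF) (B : Set V) : (φ.close B).WF := by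
  induction φ generalizing B with
  | lit => trivial
  | var X => by_cases hX : unbar X ∈ B <;> simp [MuF.close, hX, wf_closedVar]; trivial
  | or _ _ ih₁ ih₂ | and _ _ ih₁ ih₂ => exact ⟨ih₁ h.1 B, ih₂ h.2 B⟩
  | dia _ _ ih | box _ _ ih => exact ih h B
  | mu _ _ ih | nu _ _ ih => exact ⟨fun hm => h.1 (mentions_close_subset _ _ hm), ih h.2 _⟩

theorem freeFor_of_not_mem_freeVars {X : V ⊕ V} {ψ φ : MuF L 𝒳 Act V}
    (h : X ∉ φ.freeVars) (hb : bar X ∉ φ.freeVars) : FreeFor X ψ φ := by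
  induction φ with
  | lit | var => trivial
  | or _ _ ih₁ ih₂ | and _ _ ih₁ ih₂ =>
    simp only [freeVars, mem_union, not_or] at h hb
    exact ⟨ih₁ h.1 hb.1, ih₂ h.2 hb.2⟩
  | dia _ _ ih | box _ _ ih => exact ih h hb
  | mu Y _ ih | nu Y _ ih =>
    by_cases hXY : unbar X = unbar Y
    · exact (unbar_eq_unbar_iff.mp hXY).elim Or.inl (Or.inr ∘ Or.inl)
    · have h' : X ∉ _ := fun hX => h ⟨hX, by rwa [mem_pair_bar_iff]⟩
      have hb' : bar X ∉ _ := fun hX => hb ⟨hX, by rwa [mem_pair_bar_iff, unbar_bar]⟩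
      exact Or.inr (Or.inr ⟨fun hX => (hX.elim h' hb').elim, ih h' hb'⟩)

theorem freeFor_var_of_not_mem_mentions {X Y : V ⊕ V} {φ : MuF L 𝒳 Act V}
    (hY : Y ∉ φ.mentions) (hbY : bar Y ∉ φ.mentions) : FreeFor X (var Y) φ := by
  induction φ with
  | lit | var => trivial
  | or _ _ ih₁ ih₂ | and _ _ ih₁ ih₂ =>
    simp only [mentions, mem_union, not_or] at hY hbY
    exact ⟨ih₁ hY.1 hbY.1, ih₂ hY.2 hbY.2⟩
  | dia _ _ ih | box _ _ ih => exact ih hY hbY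
  | mu Z _ ih | nu Z _ ih =>
    simp only [mentions, mem_union, mem_singleton_iff, not_or] at hY hbY
    refine Or.inr (Or.inr ⟨fun _ => ?_, ih hY.2 hbY.2⟩)
    simp only [freeVars, mem_singleton_iff]
    exact ⟨fun h => hY.1 h.symm, fun h => hbY.1 (by rw [← h, bar_bar])⟩

open Classical in
theorem close_congr {B₁ B₂ : Set V} {φ : MuF L 𝒳 Act V}
    (h : ∀ X ∈ φ.freeVars, unbar X ∈ B₁ ↔ unbar X ∈ B₂) : φ.close B₁ = φ.close B₂ := by
  induction φ generalizing B₁ B₂ with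
  | lit => rfl
  | var X => simp only [close]; exact if_congr (h X (mem_singleton X)) rfl rfl
  | or _ _ ih₁ ih₂ | and _ _ ih₁ ih₂ =>
    simp only [close]
    rw [ih₁ fun X hX => h X (Or.inl hX), ih₂ fun X hX => h X (Or.inr hX)]
  | dia _ _ ih | box _ _ ih => simp only [close]; rw [ih h]
  | mu X _ ih | nu X _ ih =>
    simp only [close]
    rw [ih fun Y hY => ?_]
    by_cases hYX : unbar Y = unbar X
    · simp [hYX]
    · simpa [hYX] using h Y ⟨hY, by rwa [mem_pair_bar_iff]⟩

theorem close_univ (φ : MuF L 𝒳 Act V) : φ.close univ = φ := by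
  induction φ with
  | lit => rfl
  | var X => simp [close]
  | or _ _ ih₁ ih₂ | and _ _ ih₁ ih₂ => simp only [close, ih₁, ih₂]
  | dia _ _ ih | box _ _ ih => simp only [close, ih]
  | mu _ _ ih | nu _ _ ih => simp only [close, insert_eq_of_mem (mem_univ _), ih]

theorem close_of_forall_mem {B : Set V} {φ : MuF L 𝒳 Act V}
    (h : ∀ X ∈ φ.freeVars, unbar X ∈ B) : φ.close B = φ :=
  (close_congr (B₂ := univ) fun X hX => by simp [h X hX]).trans (close_univ φ)

theorem close_of_freeVars_eq_empty {B : Set V} {φ : MuF L 𝒳 Act V} (h : φ.freeVars = ∅) :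
    φ.close B = φ :=
  close_of_forall_mem (by simp [h])

theorem close_compl (B : Set V) (φ : MuF L 𝒳 Act V) : φ.compl.close B = (φ.close B).compl := by
  induction φ generalizing B with
  | lit => rfl
  | var X => by_cases h : unbar X ∈ B <;> simp [compl, close, h]
  | or _ _ ih₁ ih₂ | and _ _ ih₁ ih₂ => simp only [compl, close, ih₁, ih₂]
  | dia _ _ ih | box _ _ ih => simp only [compl, close, ih]
  | mu _ _ ih | nu _ _ ih => simp only [compl, close, unbar_bar, ih]

theorem close_imp (B : Set V) (φ ψ : MuF L 𝒳 Act V) :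
    (φ.imp ψ).close B = (φ.close B).imp (ψ.close B) := by
  simp only [imp, close, close_compl]

theorem close_iff (B : Set V) (φ ψ : MuF L 𝒳 Act V) :
    (φ.iff ψ).close B = (φ.close B).iff (ψ.close B) := by
  simp only [iff, close, close_imp]

theorem FreeFor.close {X : V ⊕ V} {ψ ψ' φ : MuF L 𝒳 Act V} (hsub : ψ'.freeVars ⊆ ψ.freeVars)
    (h : FreeFor X ψ φ) (B : Set V) : FreeFor X ψ' (φ.close B) := by
  induction φ generalizing B with
  | lit => trivial
  | var Y =>
    by_cases hY : unbar Y ∈ B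
    · rw [close_var_of_mem hY]; trivial
    · rw [close_var_of_not_mem hY]
      exact freeFor_of_not_mem_freeVars (by simp) (by simp)
  | or _ _ ih₁ ih₂ | and _ _ ih₁ ih₂ => exact ⟨ih₁ h.1 B, ih₂ h.2 B⟩
  | dia _ _ ih | box _ _ ih => exact ih h B
  | mu _ _ ih | nu _ _ ih =>
    rcases h with h | h | ⟨hψ, h⟩
    · exact Or.inl h
    · exact Or.inr (Or.inl h)
    · refine Or.inr (Or.inr ⟨fun hX => ?_, ih h _⟩)
      obtain ⟨hZ, hbZ⟩ := hψ (hX.imp (freeVars_close_subset _ _ ·) (freeVars_close_subset _ _ ·))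
      exact ⟨mt (@hsub _) hZ, mt (@hsub _) hbZ⟩

end MuF

namespace MuF

variable {L : Language} {𝒳 Act V : Type*} [DecidableEq V]

theorem subst_of_not_mem_freeVars {X : V ⊕ V} {ψ φ : MuF L 𝒳 Act V}
    (h : X ∉ φ.freeVars) (hb : bar X ∉ φ.freeVars) : subst X ψ φ = φ := by
  induction φ with
  | lit => rfl
  | var Y =>
    simp only [freeVars, mem_singleton_iff] at h hb
    simp [subst, Ne.symm h, Ne.symm hb]
  | or _ _ ih₁ ih₂ | and _ _ ih₁ ih₂ =>
    simp only [freeVars, mem_union, not_or] at h hb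
    rw [subst, ih₁ h.1 hb.1, ih₂ h.2 hb.2]
  | dia _ _ ih | box _ _ ih => rw [subst, ih h hb]
  | mu Y _ ih | nu Y _ ih =>
    rw [subst]
    split_ifs with hXY
    · rfl
    · rw [← unbar_eq_unbar_iff] at hXY
      rw [ih (fun hX => h ⟨hX, by rwa [mem_pair_bar_iff]⟩)
        (fun hX => hb ⟨hX, by rwa [mem_pair_bar_iff, unbar_bar]⟩)]

theorem subst_congr {X : V ⊕ V} {ψ₁ ψ₂ φ : MuF L 𝒳 Act V}
    (h : X ∈ φ.freeVars ∨ bar X ∈ φ.freeVars → ψ₁ = ψ₂) : subst X ψ₁ φ = subst X ψ₂ φ := by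
  by_cases hX : X ∈ φ.freeVars ∨ bar X ∈ φ.freeVars
  · rw [h hX]
  · rw [not_or] at hX
    rw [subst_of_not_mem_freeVars hX.1 hX.2, subst_of_not_mem_freeVars hX.1 hX.2]

theorem freeVars_subst_subset {X : V ⊕ V} {ψ : MuF L 𝒳 Act V} (hψ : ψ.freeVars = ∅)
    (hψc : ψ.compl.freeVars = ∅) (φ : MuF L 𝒳 Act V) :
    (subst X ψ φ).freeVars ⊆ φ.freeVars := by
  induction φ with
  | lit => simp [subst, freeVars]
  | var Y =>
    rw [subst]
    split_ifs
    · simp [hψ]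
    · simp [hψc]
    · rfl
  | or _ _ ih₁ ih₂ | and _ _ ih₁ ih₂ => exact union_subset_union ih₁ ih₂
  | dia _ _ ih | box _ _ ih => exact ih
  | mu _ _ ih | nu _ _ ih =>
    rw [subst]
    split_ifs
    · rfl
    · exact sdiff_subset_sdiff_left ih

theorem close_subst {X : V ⊕ V} {ψ φ : MuF L 𝒳 Act V} (h : FreeFor X ψ φ) (B : Set V) :
    (subst X ψ φ).close B = subst X (ψ.close B) (φ.close (insert (unbar X) B)) := by
  induction φ generalizing B with
  | lit => rfl
  | var Y =>
    by_cases hYX : unbar Y = unbar X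
    · rcases unbar_eq_unbar_iff.mp hYX with rfl | rfl
      · simp [subst, close_var_of_mem]
      · simp [subst, bar_ne_self, close_compl, close_var_of_mem]
    · have hY : Y ≠ X ∧ Y ≠ bar X := not_or.mp (mt unbar_eq_unbar_iff.mpr hYX)
      by_cases hYB : unbar Y ∈ B
      · simp [subst, close_var_of_mem, hYB, hY.1, hY.2]
      · simp [subst, close_var_of_not_mem, hYB, hYX, hY.1, hY.2, subst_of_not_mem_freeVars]
  | or _ _ ih₁ ih₂ | and _ _ ih₁ ih₂ => simp only [subst, MuF.close, ih₁ h.1, ih₂ h.2]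
  | dia _ _ ih | box _ _ ih => simp only [subst, MuF.close, ih h]
  | mu Z φ ih | nu Z φ ih =>
    by_cases hXZ : unbar X = unbar Z
    · have hc := unbar_eq_unbar_iff.mp hXZ
      simp only [subst, if_pos hc, MuF.close, hXZ, insert_idem]
    · have hc := mt unbar_eq_unbar_iff.mpr hXZ
      obtain h | h | ⟨hψ, h⟩ := h
      · exact absurd (Or.inl h) hc
      · exact absurd (Or.inr h) hc
      simp only [subst, if_neg hc, MuF.close]
      rw [ih h, insert_comm (unbar Z)]
      refine congrArg _ (subst_congr fun hX => close_congr fun W hW => ?_)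
      obtain ⟨hZ, hbZ⟩ :=
        hψ (hX.imp (freeVars_close_subset _ _ ·) (freeVars_close_subset _ _ ·))
      have hWZ : unbar W ≠ unbar Z := fun hWZ =>
        (unbar_eq_unbar_iff.mp hWZ).elim (fun e => hZ (e ▸ hW)) (fun e => hbZ (e ▸ hW))
      simp [hWZ]

theorem close_eq_close_subst_closedVar {X : V ⊕ V} {B : Set V} (hXB : unbar X ∉ B)
    (φ : MuF L 𝒳 Act V) : φ.close B = (subst X (closedVar X) φ).close (insert (unbar X) B) := by
  induction φ generalizing B with
  | lit => rfl
  | var Y =>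
    by_cases hYX : unbar Y = unbar X
    · rcases unbar_eq_unbar_iff.mp hYX with rfl | rfl
      · simp [subst, close_var_of_not_mem hXB, close_of_freeVars_eq_empty]
      · simp [subst, bar_ne_self, close_var_of_not_mem, hXB, close_of_freeVars_eq_empty]
    · have hY : Y ≠ X ∧ Y ≠ bar X := not_or.mp (mt unbar_eq_unbar_iff.mpr hYX)
      simp only [subst, if_neg hY.1, if_neg hY.2]
      exact close_congr fun W hW => by simp_all [freeVars]
  | or _ _ ih₁ ih₂ | and _ _ ih₁ ih₂ => simp only [subst, MuF.close, ← ih₁ hXB, ← ih₂ hXB]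
  | dia _ _ ih | box _ _ ih => simp only [subst, MuF.close, ← ih hXB]
  | mu Z φ ih | nu Z φ ih =>
    by_cases hXZ : unbar X = unbar Z
    · have hc := unbar_eq_unbar_iff.mp hXZ
      simp only [subst, if_pos hc, MuF.close, hXZ, insert_idem]
    · have hc := mt unbar_eq_unbar_iff.mpr hXZ
      simp only [subst, if_neg hc, MuF.close]
      rw [ih (by simp [hXZ, hXB]), insert_comm]

theorem ncard_subst_closedVar_lt {X : V ⊕ V} {B : Set V} {φ : MuF L 𝒳 Act V}
    (hX : X ∈ φ.freeVars) (hXB : unbar X ∉ B) :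
    {Y ∈ (subst X (closedVar X) φ).freeVars | unbar Y ∉ insert (unbar X) B}.ncard <
      {Y ∈ φ.freeVars | unbar Y ∉ B}.ncard := by
  have hsub : {Y ∈ (subst X (closedVar X) φ).freeVars | unbar Y ∉ insert (unbar X) B} ⊆
      {Y ∈ φ.freeVars | unbar Y ∉ B} := fun Y hY =>
    ⟨freeVars_subst_subset (by simp) (by simp) φ hY.1, fun h => hY.2 (mem_insert_of_mem _ h)⟩
  refine ncard_lt_ncard ?_ ((freeVars_finite φ).subset (sep_subset _ _))
  exact (ssubset_iff_of_subset hsub).mpr ⟨X, ⟨hX, hXB⟩, fun h => h.2 (mem_insert _ _)⟩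

theorem close_subst_var {X Y : V ⊕ V} {φ : MuF L 𝒳 Act V} (hY : Y ∉ φ.mentions)
    (hbY : bar Y ∉ φ.mentions) (B : Set V) :
    (subst X (var Y) φ).close (insert (unbar Y) B) =
      subst X (var Y) (φ.close (insert (unbar X) B)) := by
  rw [close_subst (freeFor_var_of_not_mem_mentions hY hbY), close_var_of_mem (mem_insert _ _)]
  refine congrArg _ (close_congr fun W hW => ?_)
  have hWY : unbar W ≠ unbar Y := fun h => (unbar_eq_unbar_iff.mp h).elim
    (fun e => hY (e ▸ freeVars_subset_mentions φ hW))
    (fun e => hbY (e ▸ freeVars_subset_mentions φ hW))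
  simp [hWY]

end MuF

section EqualityAxioms

variable {L : Language} {𝒳 Act V : Type*}

theorem freeVars_impChain_eq_empty {l : List (MuF L 𝒳 Act V)} {χ : MuF L 𝒳 Act V}
    (hl : ∀ φ ∈ l, φ.compl.freeVars = ∅) (hχ : χ.freeVars = ∅) :
    (impChain l χ).freeVars = ∅ := by
  induction l with
  | nil => exact hχ
  | cons φ l ih =>
    simp only [impChain, MuF.imp, MuF.freeVars, hl φ (by simp),
      ih fun ψ hψ => hl ψ (by simp [hψ]), union_empty]

theorem MuEqAx.freeVars_eq_empty {φ : MuF L 𝒳 Act V} (h : MuEqAx φ) : φ.freeVars = ∅ := by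
  cases h with
  | refl => rfl
  | symm | trans => simp [MuF.imp, MuF.compl, MuF.freeVars]
  | congFun => exact freeVars_impChain_eq_empty (by simp [MuF.compl, MuF.freeVars]) rfl
  | congRel =>
    exact freeVars_impChain_eq_empty (by simp [MuF.compl, MuF.freeVars])
      (by simp [MuF.imp, MuF.compl, MuF.freeVars])

end EqualityAxioms

section Closing

variable {L : Language} {𝒳 Act V : Type*} [DecidableEq V]

/-- Closing the free variables one at a time writes `φ.close B` as a sequence of
substitution instances of `φ`. -/
theorem MuTaut.close {φ : MuF L 𝒳 Act V} (ht : MuTaut φ) (B : Set V) : MuTaut (φ.close B) := by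
  by_cases h : ∃ X ∈ φ.freeVars, unbar X ∉ B
  · obtain ⟨X, hX, hXB⟩ := h
    rw [MuF.close_eq_close_subst_closedVar hXB]
    exact (ht.subst X (MuF.closedVar X)).close (insert (unbar X) B)
  · simp only [not_exists, not_and, not_not] at h
    rwa [MuF.close_of_forall_mem h]
termination_by {X ∈ φ.freeVars | unbar X ∉ B}.ncard
decreasing_by exact MuF.ncard_subst_closedVar_lt hX hXB

theorem AEq.close {φ ψ : MuF L 𝒳 Act V} (h : AEq φ ψ) (B : Set V) :
    AEq (φ.close B) (ψ.close B) := by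
  induction h generalizing B with
  | refl => exact .refl _
  | symm _ ih => exact (ih B).symm
  | trans _ _ ih₁ ih₂ => exact (ih₁ B).trans (ih₂ B)
  | or _ _ ih₁ ih₂ => exact .or (ih₁ B) (ih₂ B)
  | and _ _ ih₁ ih₂ => exact .and (ih₁ B) (ih₂ B)
  | dia a _ ih => exact .dia a (ih B)
  | box a _ ih => exact .box a (ih B)
  | mu X _ ih => exact .mu X (ih _)
  | nu X _ ih => exact .nu X (ih _)
  | muRename hY hbY =>
    simp only [MuF.close]
    rw [MuF.close_subst_var hY hbY]
    exact .muRename (mt (MuF.mentions_close_subset _ _ ·) hY)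
      (mt (MuF.mentions_close_subset _ _ ·) hbY)
  | nuRename hY hbY =>
    simp only [MuF.close]
    rw [MuF.close_subst_var hY hbY]
    exact .nuRename (mt (MuF.mentions_close_subset _ _ ·) hY)
      (mt (MuF.mentions_close_subset _ _ ·) hbY)

end Closing

namespace MuF

variable {L : Language} {𝒳 V A₀ : Type*}

theorem ovarsF_close (fvB : A₀ → Set 𝒳) (B : Set V) (φ : MuF L 𝒳 (CAct L 𝒳 A₀) V) :
    (φ.close B).ovarsF fvB = φ.ovarsF fvB := by
  induction φ generalizing B with
  | lit => rfl
  | var X => by_cases h : unbar X ∈ B <;> simp [ovarsF, close, h]; cases X <;> rfl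
  | or _ _ ih₁ ih₂ | and _ _ ih₁ ih₂ => simp only [ovarsF, close, ih₁, ih₂]
  | dia _ _ ih | box _ _ ih | mu _ _ ih | nu _ _ ih => simp only [ovarsF, close, ih]

theorem obindsC_close (B : Set V) (φ : MuF L 𝒳 (CAct L 𝒳 A₀) V) :
    (φ.close B).obindsC = φ.obindsC := by
  induction φ generalizing B with
  | lit => rfl
  | var X => by_cases h : unbar X ∈ B <;> simp [obindsC, close, h]; cases X <;> rfl
  | or _ _ ih₁ ih₂ | and _ _ ih₁ ih₂ => simp only [obindsC, close, ih₁, ih₂]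
  | dia _ _ ih | box _ _ ih | mu _ _ ih | nu _ _ ih => simp only [obindsC, close, ih]

theorem baseActs_close (B : Set V) (φ : MuF L 𝒳 (CAct L 𝒳 A₀) V) :
    (φ.close B).baseActs = φ.baseActs := by
  induction φ generalizing B with
  | lit => rfl
  | var X => by_cases h : unbar X ∈ B <;> simp [baseActs, close, h]; cases X <;> rfl
  | or _ _ ih₁ ih₂ | and _ _ ih₁ ih₂ => simp only [baseActs, close, ih₁, ih₂]
  | dia _ _ ih | box _ _ ih | mu _ _ ih | nu _ _ ih => simp only [baseActs, close, ih]

variable [DecidableEq 𝒳]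

theorem close_osub (x : 𝒳) (θ : L.Term 𝒳) (B : Set V) (φ : MuF L 𝒳 (CAct L 𝒳 A₀) V) :
    (φ.osub x θ).close B = (φ.close B).osub x θ := by
  induction φ generalizing B with
  | lit => rfl
  | var X => by_cases h : unbar X ∈ B <;> simp [osub, close, h]; cases X <;> rfl
  | or _ _ ih₁ ih₂ | and _ _ ih₁ ih₂ => simp only [osub, close, ih₁, ih₂]
  | dia a _ ih | box a _ ih => by_cases hb : a.bindsB x <;> simp [osub, close, hb, ih]
  | mu _ _ ih | nu _ _ ih => simp only [osub, close, ih]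

theorem close_oswap (sw : 𝒳 → 𝒳 → A₀ → A₀) (x y : 𝒳) (B : Set V)
    (φ : MuF L 𝒳 (CAct L 𝒳 A₀) V) : (φ.oswap sw x y).close B = (φ.close B).oswap sw x y := by
  induction φ generalizing B with
  | lit => rfl
  | var X => by_cases h : unbar X ∈ B <;> simp [oswap, close, h]; cases X <;> rfl
  | or _ _ ih₁ ih₂ | and _ _ ih₁ ih₂ => simp only [oswap, close, ih₁, ih₂]
  | dia _ _ ih | box _ _ ih | mu _ _ ih | nu _ _ ih => simp only [oswap, close, ih]

end MuF

theorem OAdm.close {L : Language} {𝒳 V A₀ : Type*} {fvB : A₀ → Set 𝒳} {x : 𝒳}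
    {θ : L.Term 𝒳} {φ : MuF L 𝒳 (CAct L 𝒳 A₀) V} (h : OAdm fvB x θ φ) (B : Set V) :
    OAdm fvB x θ (φ.close B) := by
  rcases h with h | ⟨hbase, hbinds, hfree⟩
  · exact .inl (by rwa [MuF.ovarsF_close])
  · refine .inr ⟨by rwa [MuF.baseActs_close], by rwa [MuF.obindsC_close], ?_⟩
    exact subset_empty_iff.mp (hfree ▸ MuF.freeVars_close_subset B φ)

section ClosedDerivations

variable {L : Language} {𝒳 V A₀ : Type*} [DecidableEq 𝒳] [DecidableEq V]
  {sw : 𝒳 → 𝒳 → A₀ → A₀} {fvB : A₀ → Set 𝒳}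

theorem MuPrv.close {T : Set (MuF L 𝒳 (CAct L 𝒳 A₀) V)} (hT : ∀ ψ ∈ T, ψ.freeVars = ∅)
    {χ : MuF L 𝒳 (CAct L 𝒳 A₀) V} (h : MuPrv sw fvB T χ) :
    MuPrvIn sw fvB {ψ | ψ.freeVars = ∅} T (χ.close ∅) := by
  induction h with
  | hyp hχ _ =>
    rw [MuF.close_of_freeVars_eq_empty (hT _ hχ)]
    exact .hyp hχ (hT _ hχ)
  | taut ht hwf _ => exact .taut (ht.close ∅) (hwf.close ∅) (MuF.freeVars_close_empty _)
  | eqax hax _ =>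
    rw [MuF.close_of_freeVars_eq_empty hax.freeVars_eq_empty]
    exact .eqax hax hax.freeVars_eq_empty
  | @mufix X φ hwf hff _ =>
    have hS := MuF.freeVars_close_empty ((MuF.subst X (.mu X φ) φ).iff (.mu X φ))
    rw [MuF.close_iff, MuF.close_subst hff] at hS ⊢
    exact .mufix (hwf.close ∅) (hff.close (MuF.freeVars_close_subset ∅ (.mu X φ)) _) hS
  | @existsI x θ φ hwf hadm _ =>
    have hS := MuF.freeVars_close_empty ((φ.osub x θ).imp (.dia (.rand x) φ))
    rw [MuF.close_imp, MuF.close_osub] at hS ⊢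
    exact .existsI (hwf.close ∅) (hadm.close ∅) hS
  | @vac x φ hwf hx _ _ =>
    have hS := MuF.freeVars_close_empty ((MuF.dia (.rand x) φ).imp φ)
    rw [MuF.close_imp] at hS ⊢
    exact .vac (hwf.close ∅) (by rwa [MuF.ovarsF_close]) (MuF.freeVars_close_empty φ) hS
  | @asgn x y θ φ hwf hyx hyθ hyφ _ _ =>
    have hS := MuF.freeVars_close_empty ((MuF.dia (.asn x θ) φ).iff
      (.dia (.rand y) (.and (.lit (.eq (.var y) θ)) (φ.oswap sw x y))))
    rw [MuF.close_iff] at hS ⊢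
    simp only [MuF.close, MuF.close_oswap] at hS ⊢
    exact .asgn (hwf.close ∅) hyx hyθ (by rwa [MuF.ovarsF_close]) (MuF.freeVars_close_empty φ) hS
  | mp _ _ _ ih₁ ih₂ =>
    rw [MuF.close_imp] at ih₁
    exact .mp ih₁ ih₂ (MuF.freeVars_close_empty _)
  | @mono a ψ φ _ _ ih =>
    have hS := MuF.freeVars_close_empty ((MuF.dia a ψ).imp (.dia a φ))
    rw [MuF.close_imp] at hS ih ⊢
    exact .mono a ih hS
  | @fpmu X ψ φ hff hwf _ _ ih =>
    have hS := MuF.freeVars_close_empty ((MuF.mu X ψ).imp φ)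
    rw [MuF.close_imp] at hS ih ⊢
    rw [MuF.close_subst hff] at ih
    exact .fpmu (hff.close (MuF.freeVars_close_subset ∅ φ) _) (hwf.close ∅) ih hS
  | alpha hφψ _ _ ih => exact .alpha (hφψ.close ∅) ih (MuF.freeVars_close_empty _)

end ClosedDerivations

/-- if `φ` is an `Lμ`-formula (without free propositional variables)
with `⊢_Lμ φ`, then there is a derivation of `φ` consisting only of `Lμ`-formulas,
i.e. a derivation in which no formula has a free propositional variable. -/
theorem mu_closed_derivation (L : Language) (𝒳 V A₀ : Type*)
    [DecidableEq 𝒳] [DecidableEq V]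
    (sw : 𝒳 → 𝒳 → A₀ → A₀) (fvB : A₀ → Set 𝒳)
    (φ : MuF L 𝒳 (CAct L 𝒳 A₀) V) (hWF : φ.WF) (hcl : φ.freeVars = ∅)
    (h : MuPrv sw fvB (∅ : Set (MuF L 𝒳 (CAct L 𝒳 A₀) V)) φ) :
    MuPrvIn sw fvB {ψ : MuF L 𝒳 (CAct L 𝒳 A₀) V | ψ.freeVars = ∅}
      (∅ : Set (MuF L 𝒳 (CAct L 𝒳 A₀) V)) φ := by
  simpa only [MuF.close_of_freeVars_eq_empty hcl] using h.close (by simp)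

end GLMu
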